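/- arXiv:1408.6405 — 3 statements merged into one kernel-verified Lean document; each statement's English description precedes it below -/
import Mathlib

section
/- Let k be an even positive integer and n a multiple of k. For a skew-symmetric function f on [n]^k, the hyperpfaffian Pf(f) = Σ_τ (-1)^τ · Π_{i=1}^{n/k} f(B_i) (sum over partitions τ = {B_1,...,B_{n/k}} of [n] into blocks of size k) satisfies: in the exterior algebra Λ on generators t_1,...,t_n, (Σ_S f(S)·t_S)^{n/k} = (n/k)! · Pf(f) · t_{[n]}, where the sum is over all k-element subsets S of [n], t_S is the wedge product of the t_s for s ∈ S in increasing order, f(S) is f evaluated on the elements of S in increasing order, and (-1)^τ is the sign of the permutation obtained by listing the blocks' elements (each block in increasing order, blocks ordered by their minima or any fixed ordering consistent with the definition). -/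
open Finset Equiv MvPolynomial

open scoped Classical

noncomputable section

/-- The position of the `j`-th element of the `i`-th block. -/
def bpos (m k : ℕ) (i : Fin m) (j : Fin k) : Fin (m * k) :=
  ⟨k * (i : ℕ) + (j : ℕ), by
    have hi := i.isLt
    have hj := j.isLt
    calc k * (i : ℕ) + (j : ℕ) < k * (i : ℕ) + k := by omega
      _ = k * ((i : ℕ) + 1) := by ring
      _ ≤ k * m := Nat.mul_le_mul_left k hi
      _ = m * k := Nat.mul_comm k m⟩

/-- Each block of the (oriented) partition is listed in increasing order. -/
def IsBlockMono (m k : ℕ) (π : Equiv.Perm (Fin (m * k))) : Prop :=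
  ∀ i : Fin m, StrictMono fun j : Fin k => π (bpos m k i j)

/-- The blocks are listed in increasing order of their first elements. -/
def IsLeadMono (m k : ℕ) (π : Equiv.Perm (Fin (m * k))) : Prop :=
  ∀ (i i' : Fin m) (j : Fin k), i < i' →
    π (bpos m k i ⟨0, j.pos⟩) < π (bpos m k i' ⟨0, j.pos⟩)

/-- Canonical representative of a set partition of `[n]`, `n = m*k`, into `m` blocks of
size `k`: each block increasing and blocks ordered by their minima. -/
def IsPartRep (m k : ℕ) (π : Equiv.Perm (Fin (m * k))) : Prop :=
  IsBlockMono m k π ∧ IsLeadMono m k π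

/-- A `k`-ary function is skew-symmetric. -/
def IsSkewFun {k : ℕ} {α R : Type*} [CommRing R] (f : (Fin k → α) → R) : Prop :=
  ∀ (σ : Equiv.Perm (Fin k)) (v : Fin k → α),
    f (v ∘ σ) = (Equiv.Perm.sign σ : ℤ) • f v

/-- The hyperpfaffian of a skew-symmetric `k`-ary function on `[m*k]`:
the signed sum over all set partitions of `[m*k]` into `m` blocks of size `k`. -/
def hyperPf (m k : ℕ) {R : Type*} [CommRing R]
    (f : (Fin k → Fin (m * k)) → R) : R :=
  ∑ π ∈ Finset.univ.filter (IsPartRep m k),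
    (Equiv.Perm.sign π : ℤ) • ∏ i : Fin m, f fun j => π (bpos m k i j)

/-- A polynomial in `k` variables is skew-symmetric. -/
def IsSkewPoly {k : ℕ} {R : Type*} [CommRing R] (f : MvPolynomial (Fin k) R) : Prop :=
  ∀ σ : Equiv.Perm (Fin k),
    MvPolynomial.rename (⇑σ) f = (Equiv.Perm.sign σ : ℤ) • f

/-- The hyperpfaffian `Pf (f(x_S))` of the values of a polynomial `f` in `k` variables
at the variables indexed by the `k`-subsets `S` of `[m*k]`. -/
def hyperPfPoly (m k : ℕ) {R : Type*} [CommRing R]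
    (f : MvPolynomial (Fin k) R) : MvPolynomial (Fin (m * k)) R :=
  ∑ π ∈ Finset.univ.filter (IsPartRep m k),
    (Equiv.Perm.sign π : ℤ) •
      ∏ i : Fin m, MvPolynomial.rename (fun j => π (bpos m k i j)) f

/-- The Vandermonde product. -/
def vand (n : ℕ) (R : Type*) [CommRing R] : MvPolynomial (Fin n) R :=
  ∏ p ∈ Finset.univ.filter (fun p : Fin n × Fin n => p.1 < p.2),
    (MvPolynomial.X p.2 - MvPolynomial.X p.1)

/-- The coefficient of `f` at the monomial with exponent vector `r`. -/
def coeffOf {k : ℕ} {R : Type*} [CommRing R] (f : MvPolynomial (Fin k) R)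
    (r : Fin k → ℕ) : R :=
  MvPolynomial.coeff (Finsupp.equivFunOnFinite.symm r) f

/-- Membership in `Γ_{n,k}`: a strictly increasing composition of `k/2*(n-1)`
into `k` distinct nonnegative parts. -/
def InGamma (n k : ℕ) (r : Fin k → ℕ) : Prop :=
  StrictMono r ∧ ∑ j, r j = k / 2 * (n - 1)

/-- Canonical representative of an element `β` of `R_{n,k}`, encoded as a permutation `e` of
`Fin (m*k)` (identified with `{0,…,n-1}`): the blocks of `e` are the compositions of `β`,
each block is increasing and sums to `k/2*(n-1)`, and the blocks are ordered canonically. -/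
def IsWeightRep (m k : ℕ) (e : Equiv.Perm (Fin (m * k))) : Prop :=
  IsPartRep m k e ∧
    ∀ i : Fin m, ∑ j : Fin k, ((e (bpos m k i j)) : ℕ) = k / 2 * (m * k - 1)

/-- The weight of the element `x` of `[m*k]` in the weighted oriented partition with
oriented partition (representative) `π` and weight vectors `w`. -/
def wtOf (m k : ℕ) (π : Equiv.Perm (Fin (m * k))) (w : Fin m → Fin k → ℕ) :
    Fin (m * k) → ℕ := fun x =>
  w ⟨((π.symm x : Fin (m*k)) : ℕ) / k, Nat.div_lt_of_lt_mul (lt_of_lt_of_le (π.symm x).isLt (le_of_eq (Nat.mul_comm m k)))⟩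
    ⟨((π.symm x : Fin (m*k)) : ℕ) % k, Nat.mod_lt _ (by
      have ht := (π.symm x).isLt
      have hk : k ≠ 0 := by rintro rfl; omega
      omega)⟩

end
/-- The generator `t_s` of the exterior algebra. -/
def tGen (n : ℕ) (R : Type*) [CommRing R] (s : Fin n) : ExteriorAlgebra R (Fin n → R) :=
  ExteriorAlgebra.ι R (Pi.single s 1)

/-- The wedge product `t_S` of the generators indexed by `S`, in increasing order. -/
def tProd (n : ℕ) (R : Type*) [CommRing R] (S : Finset (Fin n)) :
    ExteriorAlgebra R (Fin n → R) :=
  ((S.sort (· ≤ ·)).map (tGen n R)).prod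

/-- `f(S)`: the value of `f` on the elements of `S` listed in increasing order
(zero junk value if `S` does not have `k` elements). -/
def fVal {n k : ℕ} {R : Type*} [CommRing R] (f : (Fin k → Fin n) → R)
    (S : Finset (Fin n)) : R :=
  if h : S.card = k then f (fun j => (S.orderIsoOfFin h j : Fin n)) else 0


/-!
Expanding the `m`-th power gives a sum over ordered `m`-tuples of `k`-subsets, and the wedge
product of their `t_S` is `sign π • t_[n]` when the subsets are disjoint, `π` being the permutation
that lists the blocks one after another, and `0` otherwise. The resulting sum runs over the
permutations `π` that increase on each block. Permuting whole blocks is an even permutation and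
does not change the summand, and each set partition arises from exactly `m!` such `π`: ordering
the blocks by their minima singles out one of them.
-/

theorem sum_smul_pow_eq_sum_piFinset {R A ι : Type*} [CommRing R] [Ring A] [Algebra R A]
    (s : Finset ι) (c : ι → R) (x : ι → A) (m : ℕ) :
    (∑ i ∈ s, c i • x i) ^ m
      = ∑ w ∈ Fintype.piFinset fun _ : Fin m => s,
          (∏ j, c (w j)) • (List.ofFn fun j => x (w j)).prod := by
  rw [← MultilinearMap.mkPiAlgebraFin_apply_const (R := R),
    MultilinearMap.map_sum_finset _ (fun _ i => c i • x i) fun _ => s]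
  refine sum_congr rfl fun w _ => ?_
  rw [MultilinearMap.map_smul_univ, MultilinearMap.mkPiAlgebraFin_apply]

theorem Tuple.sort_comp_perm_of_strictMono {α : Type*} [LinearOrder α] {n : ℕ} {a : Fin n → α}
    (ha : StrictMono a) (σ : Perm (Fin n)) : Tuple.sort (a ∘ σ) = σ⁻¹ := by
  refine (Tuple.eq_sort_iff.2 ⟨?_, fun i j hij h => ?_⟩).symm
  · simpa [Function.comp_def] using ha.monotone
  · exact absurd ((σ⁻¹).injective (σ.injective (ha.injective h))) hij.ne

section ExteriorWedge

variable (R : Type*) [CommRing R] {n N : ℕ}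

noncomputable def tWedge (u : Fin N → Fin n) : ExteriorAlgebra R (Fin n → R) :=
  ExteriorAlgebra.ιMulti R N fun a => Pi.single (u a) 1

variable {R}

theorem tWedge_eq_prod (u : Fin N → Fin n) :
    tWedge R u = (List.ofFn fun a => tGen n R (u a)).prod :=
  ExteriorAlgebra.ιMulti_apply _

theorem tWedge_eq_zero_of_not_injective {u : Fin N → Fin n} (h : ¬ Function.Injective u) :
    tWedge R u = 0 := by
  obtain ⟨a, b, hab, hne⟩ : ∃ a b, u a = u b ∧ a ≠ b := by
    simpa [Function.Injective] using h
  exact AlternatingMap.map_eq_zero_of_eq _ _ (by rw [hab]) hne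

theorem tWedge_comp_perm (u : Fin N → Fin n) (σ : Perm (Fin N)) :
    tWedge R (u ∘ σ) = Perm.sign σ • tWedge R u :=
  AlternatingMap.map_perm _ (fun a => (Pi.single (u a) 1 : Fin n → R)) σ

theorem tProd_eq_tWedge (S : Finset (Fin n)) (h : S.card = N) :
    tProd n R S = tWedge R (S.orderEmbOfFin h) := by
  rw [tWedge_eq_prod, tProd, ← listMap_orderEmbOfFin_finRange S h, List.map_map,
    List.ofFn_eq_map]
  rfl

theorem tWedge_perm (π : Perm (Fin n)) :
    tWedge R π = Perm.sign π • tProd n R univ := by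
  rw [tProd_eq_tWedge univ (card_fin n), ← tWedge_comp_perm]
  congr
  funext x
  rw [Function.comp_apply,
    ← orderEmbOfFin_unique (card_fin n) (fun _ => mem_univ _) strictMono_id]
  rfl

end ExteriorWedge

theorem fVal_eq_of_card_eq {n k : ℕ} {R : Type*} [CommRing R] (f : (Fin k → Fin n) → R)
    {S : Finset (Fin n)} (h : S.card = k) : fVal f S = f (S.orderEmbOfFin h) := by
  rw [fVal, dif_pos h]
  rfl

theorem sum_fVal_smul_tProd {n k : ℕ} {R : Type*} [CommRing R] (f : (Fin k → Fin n) → R) :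
    ∑ S ∈ powersetCard k univ, fVal f S • tProd n R S
      = ∑ v ∈ univ.filter fun v : Fin k → Fin n => StrictMono v, f v • tWedge R v := by
  refine sum_bij' (fun S hS => S.orderEmbOfFin (mem_powersetCard.1 hS).2)
    (fun v _ => univ.image v) (fun S _ => ?_) (fun v hv => ?_) (fun S _ => ?_) (fun v hv => ?_)
    (fun S hS => ?_)
  · simpa using (S.orderEmbOfFin _).strictMono
  · rw [mem_filter] at hv
    simp [card_image_of_injective _ hv.2.injective]
  · exact image_orderEmbOfFin_univ S _
  · exact (orderEmbOfFin_unique _ (fun a => mem_image_of_mem v (mem_univ a))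
      (mem_filter.1 hv).2).symm
  · rw [fVal_eq_of_card_eq f (mem_powersetCard.1 hS).2, tProd_eq_tWedge S (mem_powersetCard.1 hS).2]

section Blocks

variable {m k : ℕ}

theorem bpos_eq_finProdFinEquiv (i : Fin m) (j : Fin k) :
    bpos m k i j = finProdFinEquiv (i, j) := by
  ext
  simp [bpos, finProdFinEquiv]
  ring

theorem prod_tWedge_blocks {R : Type*} [CommRing R] {n : ℕ} (u : Fin (m * k) → Fin n) :
    (List.ofFn fun i => tWedge R fun j => u (bpos m k i j)).prod = tWedge R u := by
  rw [tWedge_eq_prod u, List.ofFn_mul, List.prod_flatten, List.map_ofFn]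
  congr
  funext i
  rw [Function.comp_apply, tWedge_eq_prod]
  congr
  funext j
  congr
  ext
  simp [bpos]
  ring

theorem sum_piFinset_strictMono_eq_sum_isBlockMono {R : Type*} [CommRing R]
    (c : (Fin k → Fin (m * k)) → R) :
    ∑ w ∈ Fintype.piFinset fun _ : Fin m => univ.filter fun v : Fin k → Fin (m * k) => StrictMono v,
        (∏ i, c (w i)) • (List.ofFn fun i => tWedge R (w i)).prod
      = ∑ π ∈ univ.filter (IsBlockMono m k),
          (∏ i, c fun j => π (bpos m k i j)) • tWedge R π := by
  symm
  refine sum_bij_ne_zero (fun π _ _ i j => π (bpos m k i j)) (fun π hπ _ => ?_)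
    (fun π _ _ π' _ _ h => ?_) (fun w hw hne => ?_) (fun π _ _ => ?_)
  · simpa [Fintype.mem_piFinset, IsBlockMono] using (mem_filter.1 hπ).2
  · apply Equiv.ext
    intro x
    obtain ⟨⟨i, j⟩, rfl⟩ := finProdFinEquiv.surjective x
    simpa [bpos_eq_finProdFinEquiv] using congrFun (congrFun h i) j
  · set u : Fin (m * k) → Fin (m * k) := fun x =>
      w (finProdFinEquiv.symm x).1 (finProdFinEquiv.symm x).2
    have hw_u : (fun i j => u (bpos m k i j)) = w := by
      funext i j
      simp only [u, bpos_eq_finProdFinEquiv, Equiv.symm_apply_apply]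
    have hu : Function.Injective u := by
      by_contra hu
      rw [← hw_u, prod_tWedge_blocks, tWedge_eq_zero_of_not_injective hu, smul_zero] at hne
      exact hne rfl
    refine ⟨Equiv.ofBijective u hu.bijective_of_finite, ?_, ?_, hw_u⟩
    · simpa [IsBlockMono, ← hw_u, Fintype.mem_piFinset] using hw
    · simpa [← hw_u, prod_tWedge_blocks] using hne
  · rw [prod_tWedge_blocks]

noncomputable def blockPerm (m k : ℕ) : Perm (Fin m) →* Perm (Fin (m * k)) where
  toFun σ := finProdFinEquiv.permCongr (Equiv.prodCongrLeft fun _ : Fin k => σ)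
  map_one' := by ext; simp [Nat.mod_add_div]
  map_mul' σ τ := by ext; simp [Equiv.permCongr_apply]

theorem blockPerm_bpos (σ : Perm (Fin m)) (i : Fin m) (j : Fin k) :
    blockPerm m k σ (bpos m k i j) = bpos m k (σ i) j := by
  simp [blockPerm, bpos_eq_finProdFinEquiv, Equiv.permCongr_apply]

theorem sign_blockPerm (hk : Even k) (σ : Perm (Fin m)) : Perm.sign (blockPerm m k σ) = 1 := by
  change Perm.sign (finProdFinEquiv.permCongr (prodCongrLeft fun _ : Fin k => σ)) = 1
  rw [Perm.sign_permCongr, Perm.sign_prodCongrLeft, prod_const, card_univ, Fintype.card_fin]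
  rcases Int.units_eq_one_or (Perm.sign σ) with h | h <;> rw [h]
  · exact one_pow k
  · exact hk.neg_one_pow

theorem prod_blocks_mul_blockPerm {M : Type*} [CommMonoid M] (c : (Fin k → Fin (m * k)) → M)
    (π : Perm (Fin (m * k))) (σ : Perm (Fin m)) :
    ∏ i, c (fun j => (π * blockPerm m k σ) (bpos m k i j)) = ∏ i, c fun j => π (bpos m k i j) := by
  simp only [Perm.mul_apply, blockPerm_bpos]
  exact Equiv.prod_comp σ fun i => c fun j => π (bpos m k i j)

theorem IsBlockMono.mul_blockPerm {π : Perm (Fin (m * k))} (hπ : IsBlockMono m k π)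
    (σ : Perm (Fin m)) : IsBlockMono m k (π * blockPerm m k σ) := by
  intro i
  simpa only [Perm.mul_apply, blockPerm_bpos] using hπ (σ i)

def blockHead (hk : 0 < k) (π : Perm (Fin (m * k))) (i : Fin m) : Fin (m * k) :=
  π (bpos m k i ⟨0, hk⟩)

theorem blockHead_injective (hk : 0 < k) (π : Perm (Fin (m * k))) :
    Function.Injective (blockHead hk π) := by
  intro i i' h
  simpa [bpos_eq_finProdFinEquiv] using π.injective h

theorem blockHead_mul_blockPerm (hk : 0 < k) (π : Perm (Fin (m * k))) (σ : Perm (Fin m)) :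
    blockHead hk (π * blockPerm m k σ) = blockHead hk π ∘ σ := by
  funext i
  simp [blockHead, blockPerm_bpos]

theorem isLeadMono_iff (hk : 0 < k) (π : Perm (Fin (m * k))) :
    IsLeadMono m k π ↔ StrictMono (blockHead hk π) :=
  ⟨fun h _ _ hii' => h _ _ ⟨0, hk⟩ hii', fun h _ _ _ hii' => h hii'⟩

theorem isPartRep_mul_blockPerm_sort (hk : 0 < k) {π : Perm (Fin (m * k))}
    (hπ : IsBlockMono m k π) :
    IsPartRep m k (π * blockPerm m k (Tuple.sort (blockHead hk π))) := by
  refine ⟨hπ.mul_blockPerm _, (isLeadMono_iff hk _).2 ?_⟩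
  rw [blockHead_mul_blockPerm]
  exact (Tuple.monotone_sort _).strictMono_of_injective
    ((blockHead_injective hk π).comp (Equiv.injective _))

theorem sort_blockHead_mul_blockPerm (hk : 0 < k) {p : Perm (Fin (m * k))}
    (hp : IsPartRep m k p) (σ : Perm (Fin m)) :
    Tuple.sort (blockHead hk (p * blockPerm m k σ)) = σ⁻¹ := by
  rw [blockHead_mul_blockPerm]
  exact Tuple.sort_comp_perm_of_strictMono ((isLeadMono_iff hk p).1 hp.2) σ

theorem sum_isBlockMono_eq_factorial_smul (hk : 0 < k) {M : Type*} [AddCommMonoid M]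
    (g : Perm (Fin (m * k)) → M) (hg : ∀ π σ, g (π * blockPerm m k σ) = g π) :
    ∑ π ∈ univ.filter (IsBlockMono m k), g π
      = m.factorial • ∑ p ∈ univ.filter (IsPartRep m k), g p := by
  calc ∑ π ∈ univ.filter (IsBlockMono m k), g π
      = ∑ q ∈ univ.filter (IsPartRep m k) ×ˢ (univ : Finset (Perm (Fin m))),
          g (q.1 * blockPerm m k q.2) := by
        refine sum_nbij' (fun π => (π * blockPerm m k (Tuple.sort (blockHead hk π)),
            (Tuple.sort (blockHead hk π))⁻¹)) (fun q => q.1 * blockPerm m k q.2)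
          (fun π hπ => ?_) (fun q hq => ?_) (fun π _ => ?_) (fun q hq => ?_) (fun π _ => ?_)
        · simpa using isPartRep_mul_blockPerm_sort hk (mem_filter.1 hπ).2
        · simpa using ((mem_filter.1 (mem_product.1 hq).1).2.1).mul_blockPerm q.2
        · simp [mul_assoc]
        · simp [mul_assoc, sort_blockHead_mul_blockPerm hk (mem_filter.1 (mem_product.1 hq).1).2]
        · simp [mul_assoc]
    _ = m.factorial • ∑ p ∈ univ.filter (IsPartRep m k), g p := by
        simp [sum_product, hg, Fintype.card_perm, smul_sum]

end Blocks

theorem stmt0_general (m k : ℕ) (hk : Even k) (hk0 : 0 < k) (R : Type*) [CommRing R]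
    (f : (Fin k → Fin (m * k)) → R) :
    (∑ S ∈ Finset.powersetCard k (Finset.univ : Finset (Fin (m * k))),
        fVal f S • tProd (m * k) R S) ^ m
      = ((m.factorial : R) * hyperPf m k f) • tProd (m * k) R Finset.univ := by
  set g : Perm (Fin (m * k)) → ExteriorAlgebra R (Fin (m * k) → R) := fun π =>
    ((Perm.sign π : ℤ) • ∏ i, f fun j => π (bpos m k i j)) • tProd (m * k) R univ
  have hg : ∀ π σ, g (π * blockPerm m k σ) = g π := fun π σ => by
    simp only [g, map_mul, sign_blockPerm hk, mul_one, prod_blocks_mul_blockPerm]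
  calc _ = ∑ π ∈ univ.filter (IsBlockMono m k), g π := by
        rw [sum_fVal_smul_tProd, sum_smul_pow_eq_sum_piFinset,
          sum_piFinset_strictMono_eq_sum_isBlockMono]
        refine sum_congr rfl fun π _ => ?_
        rw [tWedge_perm, smul_comm, Units.smul_def, ← smul_assoc]
    _ = m.factorial • ∑ p ∈ univ.filter (IsPartRep m k), g p :=
        sum_isBlockMono_eq_factorial_smul hk0 g hg
    _ = _ := by
        rw [hyperPf, mul_sum, sum_smul, smul_sum]
        refine sum_congr rfl fun p _ => ?_
        rw [← Nat.cast_smul_eq_nsmul R, smul_smul]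

theorem stmt0 (m k : ℕ) (hk : Even k) (hk0 : 0 < k) (R : Type*) [CommRing R]
    (f : (Fin k → Fin (m * k)) → R) (hf : IsSkewFun f) :
    (∑ S ∈ Finset.powersetCard k (Finset.univ : Finset (Fin (m * k))),
        fVal f S • tProd (m * k) R S) ^ m
      = ((m.factorial : R) * hyperPf m k f) • tProd (m * k) R Finset.univ :=
  stmt0_general m k hk hk0 R f
end

section
/- Let W_{n,k}^r be the set of weighted oriented partitions of [n] (blocks of even size k, each block linearly ordered and assigned a strictly increasing weight composition from Γ_{n,k}) in which at least two elements of [n] receive the same weight. Define φ: W_{n,k}^r → W_{n,k}^r by taking the lexicographically smallest pair (i,j) with w(i) = w(j) and swapping the positions of i and j in the partition, leaving all weight vectors and orientations fixed. Then φ is an involution satisfying c(φ(ρ)) = c(ρ), w(φ(ρ)) = w(ρ), and (-1)^{φ(ρ)} = −(-1)^ρ. -/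
open Finset Equiv MvPolynomial

open scoped Classical

lemma wtOf_swap_apply (m k : ℕ) (π : Equiv.Perm (Fin (m * k))) (w : Fin m → Fin k → ℕ)
    (i j x : Fin (m * k)) :
    wtOf m k (Equiv.swap i j * π) w x = wtOf m k π w (Equiv.swap i j x) := by
  have h : (Equiv.swap i j * π).symm x = π.symm (Equiv.swap i j x) := by
    simp [Equiv.Perm.mul_def]
  simp only [wtOf, h]

lemma wtOf_bpos (m k : ℕ) (σ : Equiv.Perm (Fin (m * k))) (w : Fin m → Fin k → ℕ)
    (i' : Fin m) (j' : Fin k) :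
    wtOf m k σ w (σ (bpos m k i' j')) = w i' j' := by
  have hk : 0 < k := j'.pos
  simp only [wtOf, Equiv.symm_apply_apply, bpos]
  have h1 : (k * (i' : ℕ) + (j' : ℕ)) / k = (i' : ℕ) := by
    rw [Nat.mul_add_div hk, Nat.div_eq_of_lt j'.isLt, Nat.add_zero]
  have h2 : (k * (i' : ℕ) + (j' : ℕ)) % k = (j' : ℕ) := by
    rw [Nat.mul_add_mod, Nat.mod_eq_of_lt j'.isLt]
  exact congrArg₂ w (Fin.ext h1) (Fin.ext h2)

lemma bpos_injective (m k : ℕ) :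
    Function.Injective (fun p : Fin m × Fin k => bpos m k p.1 p.2) := by
  rintro ⟨a, b⟩ ⟨c, d⟩ h
  have hv : k * (a : ℕ) + (b : ℕ) = k * (c : ℕ) + (d : ℕ) := congrArg Fin.val h
  have hk : 0 < k := b.pos
  have hb : (b : ℕ) = (k * (a : ℕ) + (b : ℕ)) % k := by
    rw [Nat.mul_add_mod, Nat.mod_eq_of_lt b.isLt]
  have hd : (d : ℕ) = (k * (c : ℕ) + (d : ℕ)) % k := by
    rw [Nat.mul_add_mod, Nat.mod_eq_of_lt d.isLt]
  have hbd : (b : ℕ) = (d : ℕ) := by rw [hb, hd, hv]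
  have hac : (a : ℕ) = (c : ℕ) := by
    have h' : k * (a : ℕ) = k * (c : ℕ) := by omega
    exact Nat.eq_of_mul_eq_mul_left hk h'
  exact Prod.ext (Fin.ext hac) (Fin.ext hbd)

lemma prod_pow_eq (m k : ℕ) {R : Type*} [CommRing R]
    (σ : Equiv.Perm (Fin (m * k))) (w : Fin m → Fin k → ℕ) :
    (∏ i' : Fin m, ∏ j' : Fin k,
        (MvPolynomial.X (σ (bpos m k i' j')) : MvPolynomial (Fin (m * k)) R) ^ (w i' j'))
      = ∏ x : Fin (m * k), (MvPolynomial.X x : MvPolynomial (Fin (m * k)) R) ^ (wtOf m k σ w x) := by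
  rw [← Fintype.prod_prod_type']
  refine Fintype.prod_bijective (fun p : Fin m × Fin k => σ (bpos m k p.1 p.2)) ?_ _ _ ?_
  · rw [Fintype.bijective_iff_injective_and_card]
    refine ⟨σ.injective.comp (bpos_injective m k), by simp⟩
  · intro p
    rw [wtOf_bpos]

theorem stmt8 (m k : ℕ) (hk : Even k) (R : Type*) [CommRing R]
    (a : (Fin k → ℕ) → R)
    (π : Equiv.Perm (Fin (m * k))) (w : Fin m → Fin k → ℕ)
    (hΓ : ∀ i : Fin m, InGamma (m * k) k (w i))
    (i j : Fin (m * k)) (hij : i < j)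
    (heq : wtOf m k π w i = wtOf m k π w j)
    (hlex : ∀ i' j' : Fin (m * k), i' < j' →
      wtOf m k π w i' = wtOf m k π w j' → i < i' ∨ (i = i' ∧ j ≤ j')) :
    wtOf m k (Equiv.swap i j * π) w = wtOf m k π w ∧
    Equiv.swap i j * (Equiv.swap i j * π) = π ∧
    ¬ Function.Injective (wtOf m k (Equiv.swap i j * π) w) ∧
    (∏ i' : Fin m, a (w i')) = (∏ i' : Fin m, a (w i')) ∧
    (∏ i' : Fin m, ∏ j' : Fin k,
        (MvPolynomial.X ((Equiv.swap i j * π) (bpos m k i' j')) :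
            MvPolynomial (Fin (m * k)) R) ^ (w i' j'))
      = (∏ i' : Fin m, ∏ j' : Fin k,
          (MvPolynomial.X (π (bpos m k i' j')) :
              MvPolynomial (Fin (m * k)) R) ^ (w i' j')) ∧
    Equiv.Perm.sign (Equiv.swap i j * π) = - Equiv.Perm.sign π := by
  have h1 : wtOf m k (Equiv.swap i j * π) w = wtOf m k π w := by
    funext x
    rw [wtOf_swap_apply]
    rcases eq_or_ne x i with rfl | hxi
    · rw [Equiv.swap_apply_left]; exact heq.symm
    · rcases eq_or_ne x j with rfl | hxj
      · rw [Equiv.swap_apply_right]; exact heq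
      · rw [Equiv.swap_apply_of_ne_of_ne hxi hxj]
  refine ⟨h1, ?_, ?_, rfl, ?_, ?_⟩
  · rw [← mul_assoc, Equiv.swap_mul_self, one_mul]
  · intro h
    have : i = j := h (by rw [h1]; exact heq)
    exact absurd this (ne_of_lt hij)
  · rw [prod_pow_eq, prod_pow_eq, h1]
  · rw [Equiv.Perm.sign_mul, Equiv.Perm.sign_swap (ne_of_lt hij), neg_one_mul]
end

section
/- For a weighted oriented partition ρ ∈ W_{n,k}^d with distinct weights, corresponding to permutation σ ∈ S_n (with w(ρ) = Π_i x_i^{σ(i)−1}) and weight-vector family β ∈ R_{n,k}, the sign factors as (-1)^ρ = (-1)^β · sgn(σ). -/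
open Finset Equiv MvPolynomial

open scoped Classical

theorem stmt10 (m k : ℕ) (hk : Even k)
    (π : Equiv.Perm (Fin (m * k))) (w : Fin m → Fin k → ℕ)
    (hΓ : ∀ i : Fin m, InGamma (m * k) k (w i))
    (e : Equiv.Perm (Fin (m * k)))
    (he : ∀ (i : Fin m) (j : Fin k), ((e (bpos m k i j)) : ℕ) = w i j)
    (σ : Equiv.Perm (Fin (m * k)))
    (hσ : ∀ x, (σ x : ℕ) = wtOf m k π w x) :
    Equiv.Perm.sign π = Equiv.Perm.sign e * Equiv.Perm.sign σ := by
  have hσe : σ = e * π.symm := by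
    ext x
    have h := hσ x
    rw [wtOf] at h
    set t : Fin (m * k) := π.symm x with ht
    have hk0 : k ≠ 0 := by
      rintro rfl
      exact absurd t.isLt (by simp)
    have hb : bpos m k
        ⟨((t : Fin (m*k)) : ℕ) / k, Nat.div_lt_of_lt_mul (lt_of_lt_of_le t.isLt (le_of_eq (Nat.mul_comm m k)))⟩
        ⟨((t : Fin (m*k)) : ℕ) % k, Nat.mod_lt _ (by
          have ht := t.isLt
          omega)⟩ = t := by
      apply Fin.ext
      simp [bpos, Nat.div_add_mod]
    have := he ⟨((t : Fin (m*k)) : ℕ) / k, Nat.div_lt_of_lt_mul (lt_of_lt_of_le t.isLt (le_of_eq (Nat.mul_comm m k)))⟩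
        ⟨((t : Fin (m*k)) : ℕ) % k, Nat.mod_lt _ (by
          have ht := t.isLt
          omega)⟩
    rw [hb] at this
    have : ((e t : Fin (m*k)) : ℕ) = (σ x : ℕ) := by rw [h, this]
    rw [Equiv.Perm.mul_apply, ← ht]
    exact this.symm
  rw [hσe, Equiv.Perm.sign_mul, Equiv.Perm.sign_symm, ← mul_assoc, ← sq, Int.units_sq, one_mul]
end
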